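/- arXiv:1912.04660 — 4 statements merged into one kernel-verified Lean document; each statement's English description precedes it below -/
import Mathlib

section
/- The Stiefel manifold S_{n,k} = {X ∈ ℝ^{n×k} : XᵀX = I_k} (with k ≤ n, distances in the Frobenius norm) is not proximally smooth with any constant R > 1: there exists a matrix X₀ with dist(X₀, S_{n,k}) = 1 admitting at least two distinct nearest points in S_{n,k}. -/
open Matrix

noncomputable def frobNorm {n k : ℕ} (A : Matrix (Fin n) (Fin k) ℝ) : ℝ :=
  Real.sqrt (Matrix.trace (Aᵀ * A))

lemma aux_mem {n k : ℕ} (hkn : k ≤ n) (s : Fin k → ℝ) (hs : ∀ j, s j ^ 2 = 1) :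
    (Matrix.of fun (i : Fin n) (j : Fin k) => if (i : ℕ) = (j : ℕ) then s j else 0)ᵀ *
      (Matrix.of fun (i : Fin n) (j : Fin k) => if (i : ℕ) = (j : ℕ) then s j else 0) = 1 := by
  ext a b
  have hcast : ∀ (i : Fin n) (a : Fin k), ((i : ℕ) = (a : ℕ)) ↔ i = Fin.castLE hkn a := by
    intro i a; constructor
    · intro h; exact Fin.ext h
    · intro h; subst h; rfl
  simp only [Matrix.mul_apply, Matrix.transpose_apply, Matrix.of_apply, Matrix.one_apply]
  simp only [hcast]
  rcases eq_or_ne a b with rfl | hab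
  · simp only [if_pos rfl]
    rw [Finset.sum_eq_single (Fin.castLE hkn a)]
    · simp [← pow_two, hs]
    · intro i _ hi; simp [hi]
    · simp
  · rw [if_neg hab, Finset.sum_eq_zero]
    intro i _
    rcases eq_or_ne i (Fin.castLE hkn a) with rfl | hia
    · have : Fin.castLE hkn a ≠ Fin.castLE hkn b := by
        intro h; exact hab (Fin.castLE_injective hkn h)
      simp [this]
    · simp [hia]

lemma trace_sq {n k : ℕ} (A : Matrix (Fin n) (Fin k) ℝ) :
    Matrix.trace (Aᵀ * A) = ∑ j : Fin k, ∑ i : Fin n, A i j ^ 2 := by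
  simp [Matrix.trace, Matrix.diag, Matrix.mul_apply, pow_two]

/-- The Stiefel manifold `S_{n,k}` is not proximally smooth with any constant `R > 1`:
there is a matrix `X₀` at (Frobenius) distance exactly `1` from `S_{n,k}` that admits
two distinct nearest points in `S_{n,k}`. -/
theorem stmt_2 {n k : ℕ} (hk : 1 ≤ k) (hkn : k ≤ n) :
    ∃ X₀ : Matrix (Fin n) (Fin k) ℝ,
      (∀ Y ∈ {X : Matrix (Fin n) (Fin k) ℝ | Xᵀ * X = 1}, 1 ≤ frobNorm (X₀ - Y)) ∧
      ∃ Y₁ Y₂ : Matrix (Fin n) (Fin k) ℝ,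
        Y₁ ∈ {X : Matrix (Fin n) (Fin k) ℝ | Xᵀ * X = 1} ∧
        Y₂ ∈ {X : Matrix (Fin n) (Fin k) ℝ | Xᵀ * X = 1} ∧
        Y₁ ≠ Y₂ ∧ frobNorm (X₀ - Y₁) = 1 ∧ frobNorm (X₀ - Y₂) = 1 := by
  have hk0 : 0 < k := hk
  set z : Fin k := ⟨0, hk0⟩ with hz
  set z' : Fin n := Fin.castLE hkn z with hz'
  set X₀ : Matrix (Fin n) (Fin k) ℝ :=
    Matrix.of (fun i j => if (i : ℕ) = (j : ℕ) ∧ j ≠ z then 1 else 0) with hX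
  set Y₁ : Matrix (Fin n) (Fin k) ℝ :=
    Matrix.of (fun i j => if (i : ℕ) = (j : ℕ) then (1 : ℝ) else 0) with hY1
  set Y₂ : Matrix (Fin n) (Fin k) ℝ :=
    Matrix.of (fun i j => if (i : ℕ) = (j : ℕ) then (if j = z then -1 else 1) else 0) with hY2
  have hY1mem : Y₁ᵀ * Y₁ = 1 := aux_mem hkn (fun _ => 1) (by intro j; norm_num)
  have hY2mem : Y₂ᵀ * Y₂ = 1 := by
    have := aux_mem hkn (fun j => if j = z then (-1 : ℝ) else 1) (by
      intro j; rcases eq_or_ne j z with rfl | h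
      · norm_num
      · simp [h])
    exact this
  -- diff matrices
  have hd1 : ∀ i j, (X₀ - Y₁) i j = if (i : ℕ) = (j : ℕ) ∧ j = z then -1 else 0 := by
    intro i j
    simp only [Matrix.sub_apply, hX, hY1, Matrix.of_apply]
    rcases eq_or_ne ((i : ℕ)) ((j : ℕ)) with h | h
    · rcases eq_or_ne j z with rfl | hj
      · simp [h]
      · simp [h, hj]
    · simp [h]
  have hd2 : ∀ i j, (X₀ - Y₂) i j = if (i : ℕ) = (j : ℕ) ∧ j = z then 1 else 0 := by
    intro i j
    simp only [Matrix.sub_apply, hX, hY2, Matrix.of_apply]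
    rcases eq_or_ne ((i : ℕ)) ((j : ℕ)) with h | h
    · rcases eq_or_ne j z with rfl | hj
      · simp [h]
      · simp [h, hj]
    · simp [h]
  have hsum : ∀ (c : ℝ), c ^ 2 = 1 →
      ∑ j : Fin k, ∑ i : Fin n, (if (i : ℕ) = (j : ℕ) ∧ j = z then c else 0) ^ 2 = 1 := by
    intro c hc
    rw [Finset.sum_eq_single z]
    · rw [Finset.sum_eq_single z']
      · simp [hz', hc]
      · intro i _ hi
        have : (i : ℕ) ≠ (z : ℕ) := by
          intro h; exact hi (Fin.ext h)
        simp [this]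
      · simp
    · intro j _ hj
      apply Finset.sum_eq_zero
      intro i _
      simp [hj]
    · simp
  refine ⟨X₀, ?_, Y₁, Y₂, hY1mem, hY2mem, ?_, ?_, ?_⟩
  · intro Y hY
    simp only [Set.mem_setOf_eq] at hY
    have hcol : ∑ i : Fin n, Y i z ^ 2 = 1 := by
      have := congrArg (fun M => M z z) hY
      simpa [Matrix.mul_apply, Matrix.one_apply, pow_two] using this
    have hle : (1 : ℝ) ≤ Matrix.trace ((X₀ - Y)ᵀ * (X₀ - Y)) := by
      rw [trace_sq]
      calc (1 : ℝ) = ∑ i : Fin n, Y i z ^ 2 := hcol.symm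
        _ = ∑ i : Fin n, (X₀ - Y) i z ^ 2 := by
            apply Finset.sum_congr rfl
            intro i _
            have : X₀ i z = 0 := by simp [hX]
            simp [Matrix.sub_apply, this]
        _ ≤ ∑ j : Fin k, ∑ i : Fin n, (X₀ - Y) i j ^ 2 := by
            apply Finset.single_le_sum (f := fun j => ∑ i : Fin n, (X₀ - Y) i j ^ 2)
            · intro j _; positivity
            · simp
    have h0 : (0:ℝ) ≤ Matrix.trace ((X₀ - Y)ᵀ * (X₀ - Y)) := by linarith
    unfold frobNorm
    rw [show (1:ℝ) = Real.sqrt 1 by simp]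
    exact Real.sqrt_le_sqrt hle
  · intro h
    have := congrArg (fun M => M z' z) h
    simp [hY1, hY2, hz'] at this
    norm_num at this
  · unfold frobNorm
    rw [trace_sq]
    have : ∀ i j, (X₀ - Y₁) i j ^ 2 = (if (i : ℕ) = (j : ℕ) ∧ j = z then (-1:ℝ) else 0) ^ 2 := by
      intro i j; rw [hd1]
    simp_rw [this]
    rw [hsum (-1) (by norm_num)]
    simp
  · unfold frobNorm
    rw [trace_sq]
    have : ∀ i j, (X₀ - Y₂) i j ^ 2 = (if (i : ℕ) = (j : ℕ) ∧ j = z then (1:ℝ) else 0) ^ 2 := by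
      intro i j; rw [hd2]
    simp_rw [this]
    rw [hsum 1 (by norm_num)]
    simp
end

section
/- Let f : ℝⁿ → ℝ be differentiable with L₁-Lipschitz gradient, let x_k ∈ S ⊆ ℝⁿ with S closed, let γ > 0, and let x_{k+1} be a nearest point in S to x_k − γ f'(x_k). Then f(x_{k+1}) ≤ f(x_k) − (1/2)(1/γ − L₁)‖x_{k+1} − x_k‖². -/
/-!
Testing the nearest-point property of `x₁` against the feasible point `x₀` gives
`‖d‖² + 2γ⟪∇f x₀, d⟫ ≤ 0` for `d = x₁ - x₀`. The descent lemma
`f (x₀ + d) ≤ f x₀ + ⟪∇f x₀, d⟫ + (L₁/2)‖d‖²`, obtained by comparing `t ↦ f (x₀ + t • d)` on `[0, 1]`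
with the parabola its derivative bound integrates to, then yields the decrease.
-/

open scoped RealInnerProductSpace

theorem image_one_le_of_hasDerivAt_le_add_mul {φ φ' : ℝ → ℝ} {C : ℝ}
    (hφ : ∀ t, HasDerivAt φ (φ' t) t) (hφ' : ∀ t ∈ Set.Ico (0 : ℝ) 1, φ' t ≤ φ' 0 + C * t) :
    φ 1 ≤ φ 0 + φ' 0 + C / 2 := by
  have hB : ∀ t, HasDerivAt (fun t => φ 0 + t * φ' 0 + C / 2 * t ^ 2) (φ' 0 + C * t) t := by
    intro t
    refine HasDerivAt.congr_deriv (((hasDerivAt_id' t).mul_const (φ' 0)).const_add (φ 0) |>.add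
      ((hasDerivAt_pow 2 t).const_mul (C / 2))) ?_
    norm_num; ring
  have := image_le_of_deriv_right_le_deriv_boundary (a := 0) (b := 1)
    (fun t _ => (hφ t).continuousAt.continuousWithinAt)
    (fun t _ => (hφ t).hasDerivWithinAt) (by simp)
    (fun t _ => (hB t).continuousAt.continuousWithinAt)
    (fun t _ => (hB t).hasDerivWithinAt) hφ' (Set.right_mem_Icc.2 zero_le_one)
  simpa using this

section

variable {E : Type*} [NormedAddCommGroup E] [InnerProductSpace ℝ E]

theorem norm_sq_add_two_mul_inner_nonpos {d g : E} {γ : ℝ} (h : ‖d + γ • g‖ ≤ ‖γ • g‖) :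
    ‖d‖ ^ 2 + 2 * γ * ⟪g, d⟫ ≤ 0 := by
  have hsq := pow_le_pow_left₀ (norm_nonneg _) h 2
  rw [norm_add_sq_real, real_inner_smul_right, real_inner_comm] at hsq
  linarith

variable [CompleteSpace E]

theorem hasDerivAt_comp_add_smul {f : E → ℝ} (hf : Differentiable ℝ f) (x d : E) (t : ℝ) :
    HasDerivAt (fun t : ℝ => f (x + t • d)) ⟪gradient f (x + t • d), d⟫ t := by
  have hline : HasDerivAt (fun t : ℝ => x + t • d) d t := by
    simpa using ((hasDerivAt_id t).smul_const d).const_add x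
  rw [inner_gradient_left]
  exact (hf (x + t • d)).hasFDerivAt.comp_hasDerivAt t hline

theorem le_add_inner_gradient_add_sq_of_lipschitz_gradient {f : E → ℝ} {L : ℝ}
    (hf : Differentiable ℝ f) (hlip : ∀ a b : E, ‖gradient f a - gradient f b‖ ≤ L * ‖a - b‖)
    (x d : E) :
    f (x + d) ≤ f x + ⟪gradient f x, d⟫ + L / 2 * ‖d‖ ^ 2 := by
  have hbound : ∀ t ∈ Set.Ico (0 : ℝ) 1,
      ⟪gradient f (x + t • d), d⟫ ≤ ⟪gradient f x, d⟫ + L * ‖d‖ ^ 2 * t := fun t ht =>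
    calc ⟪gradient f (x + t • d), d⟫
        = ⟪gradient f x, d⟫ + ⟪gradient f (x + t • d) - gradient f x, d⟫ := by
          rw [inner_sub_left, add_sub_cancel]
      _ ≤ ⟪gradient f x, d⟫ + ‖gradient f (x + t • d) - gradient f x‖ * ‖d‖ := by
          gcongr; exact real_inner_le_norm _ _
      _ ≤ ⟪gradient f x, d⟫ + L * ‖t • d‖ * ‖d‖ := by
          gcongr; simpa using hlip (x + t • d) x
      _ = ⟪gradient f x, d⟫ + L * ‖d‖ ^ 2 * t := by
          rw [norm_smul, Real.norm_of_nonneg ht.1]; ring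
  have key := image_one_le_of_hasDerivAt_le_add_mul (hasDerivAt_comp_add_smul hf x d)
    (by simpa only [zero_smul, add_zero] using hbound)
  simpa [mul_div_right_comm] using key

end

theorem stmt_3_general {n : ℕ} (S : Set (EuclideanSpace ℝ (Fin n)))
    (f : EuclideanSpace ℝ (Fin n) → ℝ) (L₁ γ : ℝ)
    (hf : Differentiable ℝ f)
    (hlip : ∀ a b : EuclideanSpace ℝ (Fin n),
      ‖gradient f a - gradient f b‖ ≤ L₁ * ‖a - b‖)
    (hγ : 0 < γ)
    (x₀ x₁ : EuclideanSpace ℝ (Fin n)) (hx₀ : x₀ ∈ S)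
    (hproj : ∀ y ∈ S,
      dist x₁ (x₀ - γ • gradient f x₀) ≤ dist y (x₀ - γ • gradient f x₀)) :
    f x₁ ≤ f x₀ - (1 / 2) * (1 / γ - L₁) * ‖x₁ - x₀‖ ^ 2 := by
  set g := gradient f x₀
  set d := x₁ - x₀
  have hstep : ‖d‖ ^ 2 + 2 * γ * ⟪g, d⟫ ≤ 0 := by
    apply norm_sq_add_two_mul_inner_nonpos
    have hshift : x₁ - (x₀ - γ • g) = d + γ • g := by simp only [d]; abel
    simpa only [dist_eq_norm, hshift, sub_sub_cancel] using hproj x₀ hx₀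
  have hinner : ⟪g, d⟫ ≤ -‖d‖ ^ 2 / (2 * γ) := by
    rw [le_div_iff₀ (by positivity)]
    linarith
  have hdesc := le_add_inner_gradient_add_sq_of_lipschitz_gradient hf hlip x₀ d
  rw [add_sub_cancel] at hdesc
  calc f x₁ ≤ f x₀ + ⟪g, d⟫ + L₁ / 2 * ‖d‖ ^ 2 := hdesc
    _ ≤ f x₀ + -‖d‖ ^ 2 / (2 * γ) + L₁ / 2 * ‖d‖ ^ 2 := by gcongr
    _ = f x₀ - 1 / 2 * (1 / γ - L₁) * ‖d‖ ^ 2 := by ring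

/-- Sufficient decrease for one step of the gradient projection algorithm:
if `x₁` is a nearest point in `S` to `x₀ - γ∇f(x₀)`, then
`f(x₁) ≤ f(x₀) - ½(1/γ - L₁)‖x₁ - x₀‖²`. -/
theorem stmt_3 {n : ℕ} (S : Set (EuclideanSpace ℝ (Fin n))) (hS : IsClosed S)
    (f : EuclideanSpace ℝ (Fin n) → ℝ) (L₁ γ : ℝ)
    (hf : Differentiable ℝ f)
    (hlip : ∀ a b : EuclideanSpace ℝ (Fin n),
      ‖gradient f a - gradient f b‖ ≤ L₁ * ‖a - b‖)
    (hγ : 0 < γ)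
    (x₀ x₁ : EuclideanSpace ℝ (Fin n)) (hx₀ : x₀ ∈ S) (hx₁ : x₁ ∈ S)
    (hproj : ∀ y ∈ S,
      dist x₁ (x₀ - γ • gradient f x₀) ≤ dist y (x₀ - γ • gradient f x₀)) :
    f x₁ ≤ f x₀ - (1 / 2) * (1 / γ - L₁) * ‖x₁ - x₀‖ ^ 2 :=
  stmt_3_general S f L₁ γ hf hlip hγ x₀ x₁ hx₀ hproj
end

section
/- Let S = {x ∈ ℝⁿ : g(x) = 0} with g : ℝⁿ → ℝᵐ of class C¹ and g'(x) of full rank m on S. Let f be differentiable with L₁-Lipschitz gradient. Suppose x, x₁ ∈ S satisfy f'(x) + (1/γ)(x₁ − x) ∈ −N(S, x₁), where N(S,x₁) is the orthogonal complement of the tangent space T_{x₁} = ker g'(x₁). Then ‖P_{T_{x₁}} f'(x₁)‖ ≤ (1/γ + L₁)‖x₁ − x‖. -/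
/-! Projecting onto `T` annihilates the normal vector `f'(x) + (1/γ)(x₁ − x)`, so
`P_T f'(x₁) = P_T (f'(x₁) − f'(x) − (1/γ)(x₁ − x))`; since `P_T` is non-expansive, the
Lipschitz bound on the gradient and the triangle inequality give the estimate. -/

theorem Submodule.norm_orthogonalProjectionOnto_le_norm_sub_of_mem_orthogonal
    {𝕜 E : Type*} [RCLike 𝕜] [NormedAddCommGroup E] [InnerProductSpace 𝕜 E]
    (K : Submodule 𝕜 E) [K.HasOrthogonalProjection] (u : E) {v : E} (hv : v ∈ Kᗮ) :
    ‖(K.orthogonalProjectionOnto u : E)‖ ≤ ‖u - v‖ := by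
  have hproj : K.orthogonalProjectionOnto u = K.orthogonalProjectionOnto (u - v) := by
    rw [map_sub, K.orthogonalProjectionOnto_apply_of_mem_orthogonal hv, sub_zero]
  rw [hproj]
  exact K.norm_orthogonalProjectionOnto_apply_le (u - v)

theorem stmt_7_general {n : ℕ}
    (f : EuclideanSpace ℝ (Fin n) → ℝ) (L₁ γ : ℝ) (hγ : 0 < γ)
    (hlip : ∀ a b : EuclideanSpace ℝ (Fin n),
      ‖gradient f a - gradient f b‖ ≤ L₁ * ‖a - b‖)
    (x x₁ : EuclideanSpace ℝ (Fin n))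
    (T : Submodule ℝ (EuclideanSpace ℝ (Fin n)))
    (hopt : -(gradient f x + (1 / γ) • (x₁ - x)) ∈ Tᗮ) :
    ‖(T.orthogonalProjectionOnto (gradient f x₁) :
        EuclideanSpace ℝ (Fin n))‖ ≤ (1 / γ + L₁) * ‖x₁ - x‖ := by
  have hnormal : gradient f x + (1 / γ) • (x₁ - x) ∈ Tᗮ := Tᗮ.neg_mem_iff.mp hopt
  calc ‖(T.orthogonalProjectionOnto (gradient f x₁) : EuclideanSpace ℝ (Fin n))‖
      ≤ ‖gradient f x₁ - (gradient f x + (1 / γ) • (x₁ - x))‖ :=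
        T.norm_orthogonalProjectionOnto_le_norm_sub_of_mem_orthogonal _ hnormal
    _ = ‖(gradient f x₁ - gradient f x) - (1 / γ) • (x₁ - x)‖ := by rw [sub_add_eq_sub_sub]
    _ ≤ ‖gradient f x₁ - gradient f x‖ + ‖(1 / γ) • (x₁ - x)‖ := norm_sub_le _ _
    _ ≤ L₁ * ‖x₁ - x‖ + 1 / γ * ‖x₁ - x‖ := by
        rw [norm_smul_of_nonneg (by positivity)]
        gcongr
        exact hlip x₁ x
    _ = (1 / γ + L₁) * ‖x₁ - x‖ := by ring

/-- If `f'(x) + (1/γ)(x₁ − x) ∈ −N(S,x₁)` with `N(S,x₁) = (ker g'(x₁))ᗮ`, then the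
tangential component of the gradient at `x₁` satisfies
`‖P_{T_{x₁}} f'(x₁)‖ ≤ (1/γ + L₁)‖x₁ − x‖`. -/
theorem stmt_7 {n m : ℕ} (g : EuclideanSpace ℝ (Fin n) → EuclideanSpace ℝ (Fin m))
    (f : EuclideanSpace ℝ (Fin n) → ℝ) (L₁ γ : ℝ) (hγ : 0 < γ)
    (hg : ContDiff ℝ 1 g) (hf : Differentiable ℝ f)
    (hlip : ∀ a b : EuclideanSpace ℝ (Fin n),
      ‖gradient f a - gradient f b‖ ≤ L₁ * ‖a - b‖)
    (S : Set (EuclideanSpace ℝ (Fin n))) (hSdef : S = {y | g y = 0})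
    (x x₁ : EuclideanSpace ℝ (Fin n)) (hx : x ∈ S) (hx₁ : x₁ ∈ S)
    (hrank : LinearMap.range (fderiv ℝ g x₁ : EuclideanSpace ℝ (Fin n) →ₗ[ℝ] EuclideanSpace ℝ (Fin m)) = ⊤)
    (T : Submodule ℝ (EuclideanSpace ℝ (Fin n)))
    (hT : T = LinearMap.ker (fderiv ℝ g x₁ : EuclideanSpace ℝ (Fin n) →ₗ[ℝ] EuclideanSpace ℝ (Fin m)))
    (hopt : -(gradient f x + (1 / γ) • (x₁ - x)) ∈ Tᗮ) :
    ‖(T.orthogonalProjectionOnto (gradient f x₁) :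
        EuclideanSpace ℝ (Fin n))‖ ≤ (1 / γ + L₁) * ‖x₁ - x‖ :=
  stmt_7_general f L₁ γ hγ hlip x x₁ T hopt
end

section
/- Let Ω ⊆ S ⊆ ℝⁿ with S compact, and suppose: (tEB) μ·dist(x, Ω) ≤ ‖F_x(x)‖ for all x ∈ S with μ > 0, where ‖F_{x₁}(x₁)‖ ≤ (L₁ + 1/γ)‖x − x₁‖ holds whenever x₁ = P_S(x − γ f'(x)) with 0 < γ < γ₀. Then for all x ∈ S and 0 < γ < γ₀, letting G_γ(x) = (x − P_S(x − γ f'(x)))/γ, one has (μ/(1 + L₁γ₀ + μγ₀))·dist(x, Ω) ≤ ‖G_γ(x)‖. -/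
open Metric

/-- The tangent Error Bound condition implies the gradient Error Bound condition:
if `μ·dist(x,Ω) ≤ Φ(x)` on `S` (with `Φ(x) = ‖P_{T_x}f'(x)‖`) and
`Φ(x₁) ≤ (L₁ + 1/γ)‖x − x₁‖` for every GPA step `x₁ = P_S(x − γ f'(x))`, then
`(μ/(1 + L₁γ₀ + μγ₀))·dist(x,Ω) ≤ ‖G_γ(x)‖ = ‖x − x₁‖/γ`. -/
theorem stmt_8 {n : ℕ} (S Ω : Set (EuclideanSpace ℝ (Fin n)))
    (hΩS : Ω ⊆ S) (hΩne : Ω.Nonempty) (hS : IsCompact S)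
    (f : EuclideanSpace ℝ (Fin n) → ℝ) (hf : Differentiable ℝ f)
    (Φ : EuclideanSpace ℝ (Fin n) → ℝ)
    (μ L₁ γ₀ : ℝ) (hμ : 0 < μ) (hL₁ : 0 ≤ L₁) (hγ₀ : 0 < γ₀)
    (htEB : ∀ x ∈ S, μ * infDist x Ω ≤ Φ x)
    (hstep : ∀ x ∈ S, ∀ γ : ℝ, 0 < γ → γ < γ₀ →
      ∀ x₁ : EuclideanSpace ℝ (Fin n), x₁ ∈ S →
        (∀ y ∈ S, dist x₁ (x - γ • gradient f x) ≤ dist y (x - γ • gradient f x)) →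
        Φ x₁ ≤ (L₁ + 1 / γ) * ‖x - x₁‖) :
    ∀ x ∈ S, ∀ γ : ℝ, 0 < γ → γ < γ₀ →
      ∀ x₁ : EuclideanSpace ℝ (Fin n), x₁ ∈ S →
        (∀ y ∈ S, dist x₁ (x - γ • gradient f x) ≤ dist y (x - γ • gradient f x)) →
        (μ / (1 + L₁ * γ₀ + μ * γ₀)) * infDist x Ω ≤ ‖x - x₁‖ / γ := by
  intro x hx γ hγ hγγ₀ x₁ hx₁S hx₁
  have hD : infDist x Ω ≤ ‖x - x₁‖ + infDist x₁ Ω := by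
    have := Metric.infDist_le_infDist_add_dist (x := x) (y := x₁) (s := Ω)
    rw [dist_eq_norm] at this
    linarith
  have h1 : μ * infDist x₁ Ω ≤ (L₁ + 1 / γ) * ‖x - x₁‖ :=
    (htEB x₁ hx₁S).trans (hstep x hx γ hγ hγγ₀ x₁ hx₁S hx₁)
  have h2 : μ * infDist x Ω ≤ (μ + L₁ + 1 / γ) * ‖x - x₁‖ := by nlinarith
  have hC : (0:ℝ) < 1 + L₁ * γ₀ + μ * γ₀ := by positivity
  have hn : (0:ℝ) ≤ ‖x - x₁‖ := norm_nonneg _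
  have h4 : μ * infDist x Ω ≤ (1 + L₁ * γ₀ + μ * γ₀) * (‖x - x₁‖ / γ) := by
    calc μ * infDist x Ω ≤ (μ + L₁ + 1 / γ) * ‖x - x₁‖ := h2
      _ ≤ (1 + L₁ * γ₀ + μ * γ₀) / γ * ‖x - x₁‖ := by
          apply mul_le_mul_of_nonneg_right _ hn
          rw [le_div_iff₀ hγ]
          have : γ * (1/γ) = 1 := by field_simp
          nlinarith
      _ = (1 + L₁ * γ₀ + μ * γ₀) * (‖x - x₁‖ / γ) := by ring
  rw [div_mul_eq_mul_div, div_le_iff₀ hC]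
  linarith [h4, mul_comm (1 + L₁ * γ₀ + μ * γ₀) (‖x - x₁‖ / γ)]
end
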